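/- Let T: X → X be a homeomorphism of a compact metric space and Φ the suspension flow over T on the suspension space X_T. If ρ_FK(x,y) = 0 with respect to T, then for any r, s ∈ [0,1) we have ρ̃_FK((x,r),(y,s)) = 0 with respect to Φ. -/

import Mathlib

open MeasureTheory Filter Set Topology
open scoped ENNReal symmDiff

section FK

structure IsFlow {X : Type*} [TopologicalSpace X] (Φ : ℝ → X → X) : Prop where
  cont : Continuous fun p : ℝ × X => Φ p.1 p.2
  map_zero : ∀ x, Φ 0 x = x
  map_add : ∀ t s x, Φ (t + s) x = Φ s (Φ t x)

variable {X : Type*} [MetricSpace X]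

/-- `x` and `y` are `(t,ε,δ)`-matchable: there are measurable `A, A' ⊆ [0,t]` of Lebesgue
measure `> (1-ε)t` and an increasing absolutely continuous onto map `h : A → A'`
(with a.e. derivative `h'`) with `|h' - 1| < ε` and `d(φ^s x, φ^{h s} y) < δ` on `A`. -/
def Matchable (Φ : ℝ → X → X) (x y : X) (t ε δ : ℝ) : Prop :=
  ∃ (A A' : Set ℝ) (h h' : ℝ → ℝ),
    MeasurableSet A ∧ MeasurableSet A' ∧
    A ⊆ Icc 0 t ∧ A' ⊆ Icc 0 t ∧
    ENNReal.ofReal ((1 - ε) * t) < volume A ∧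
    ENNReal.ofReal ((1 - ε) * t) < volume A' ∧
    MapsTo h A A' ∧ SurjOn h A A' ∧ StrictMonoOn h A ∧
    (∀ B ⊆ A, MeasurableSet B → volume (h '' B) = ENNReal.ofReal (∫ s in B, h' s)) ∧
    (∀ s ∈ A, |h' s - 1| < ε) ∧
    (∀ s ∈ A, dist (Φ s x) (Φ (h s) y) < δ)

/-- The `(t,δ)`-gap `f̃_{t,δ}(x,y)`; by convention it equals `1` when no matching exists. -/
noncomputable def fkGap (Φ : ℝ → X → X) (t δ : ℝ) (x y : X) : ℝ :=
  sInf ({ε : ℝ | 0 < ε ∧ Matchable Φ x y t ε δ} ∪ {1})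

/-- `f̃_δ(x,y) = limsup_{t → ∞} f̃_{t,δ}(x,y)`. -/
noncomputable def fkDist (Φ : ℝ → X → X) (δ : ℝ) (x y : X) : ℝ :=
  Filter.limsup (fun t => fkGap Φ t δ x y) Filter.atTop

/-- The Feldman–Katok pseudometric for flows. -/
noncomputable def rhoFK (Φ : ℝ → X → X) (x y : X) : ℝ :=
  sInf {δ : ℝ | 0 < δ ∧ fkDist Φ δ x y < δ}

/-- Discrete `(n,δ)`-matching of cardinality `k` for a map `T`. -/
def DMatching (T : X → X) (x y : X) (n : ℕ) (δ : ℝ) (k : ℕ) : Prop :=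
  ∃ (D D' : Finset ℕ) (π : ℕ → ℕ),
    D ⊆ Finset.range n ∧ D' ⊆ Finset.range n ∧ D.card = k ∧
    Set.BijOn π ↑D ↑D' ∧ StrictMonoOn π ↑D ∧
    ∀ i ∈ D, dist (T^[i] x) (T^[π i] y) < δ

/-- The discrete `(n,δ)`-gap `f̄_{n,δ}(x,y)`. -/
noncomputable def dGap (T : X → X) (n : ℕ) (δ : ℝ) (x y : X) : ℝ :=
  1 - ((sSup {k : ℕ | DMatching T x y n δ k} : ℕ) : ℝ) / n

/-- `f̄_δ(x,y) = limsup_{n → ∞} f̄_{n,δ}(x,y)`. -/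
noncomputable def dFKdist (T : X → X) (δ : ℝ) (x y : X) : ℝ :=
  Filter.limsup (fun n : ℕ => dGap T n δ x y) Filter.atTop

/-- The discrete Feldman–Katok pseudometric. -/
noncomputable def dRhoFK (T : X → X) (x y : X) : ℝ :=
  sInf {δ : ℝ | 0 < δ ∧ dFKdist T δ x y ≤ δ}

variable [MeasurableSpace X] [BorelSpace X]

/-- The `t`-empirical measure `μ_{x,t} = (1/t) ∫_0^t δ_{φ^s x} ds`. -/
noncomputable def empMeasure (Φ : ℝ → X → X) (x : X) (t : ℝ) : Measure X :=
  (ENNReal.ofReal (1 / t)) • Measure.map (fun s => Φ s x) (volume.restrict (Icc 0 t))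

/-- `x` is generic for `μ`: empirical measures converge to `μ` in the weak* topology. -/
def Generic (Φ : ℝ → X → X) (μ : Measure X) (x : X) : Prop :=
  ∀ f : C(X, ℝ), Tendsto (fun t => ∫ z, f z ∂(empMeasure Φ x t)) atTop (𝓝 (∫ z, f z ∂μ))

def FlowInvariant (Φ : ℝ → X → X) (μ : Measure X) : Prop :=
  ∀ t : ℝ, MeasurePreserving (Φ t) μ μ

def FlowErgodic (Φ : ℝ → X → X) (μ : Measure X) : Prop :=
  FlowInvariant Φ μ ∧
    ∀ A : Set X, MeasurableSet A → (∀ t, Φ t ⁻¹' A = A) → μ A = 0 ∨ μ A = 1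

/-- The Prokhorov metric. -/
noncomputable def prokhorov (μ ν : Measure X) : ℝ :=
  sInf {ε : ℝ | 0 < ε ∧ ∀ B : Set X, MeasurableSet B →
    μ B ≤ ν (Metric.thickening ε B) + ENNReal.ofReal ε}

/-- A finite Borel partition of `X`, indexed by `ℕ` with all but finitely many cells empty. -/
structure BPartition (X : Type*) [MeasurableSpace X] where
  cells : ℕ → Set X
  measurable : ∀ j, MeasurableSet (cells j)
  disj : Pairwise (Function.onFun Disjoint cells)
  cover : ⋃ j, cells j = Set.univ
  finite : ∃ n, ∀ j, n ≤ j → cells j = ∅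

/-- The partition pseudometric `d_μ(P,Q)` (infimum over orderings of
`μ {x : P(x) ≠ Q(x)}`). -/
noncomputable def dPart (μ : Measure X) (P Q : ℕ → Set X) : ℝ :=
  ⨅ σ : Equiv.Perm ℕ, (μ (⋃ j, P j \ Q (σ j))).toReal

/-- `(t,ε,P)`-matchability with respect to a partition `P` (Ratner). -/
def PMatchable (Φ : ℝ → X → X) (P : ℕ → Set X) (x y : X) (t ε : ℝ) : Prop :=
  ∃ (A A' : Set ℝ) (h h' : ℝ → ℝ),
    MeasurableSet A ∧ MeasurableSet A' ∧
    A ⊆ Icc 0 t ∧ A' ⊆ Icc 0 t ∧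
    ENNReal.ofReal ((1 - ε) * t) < volume A ∧
    ENNReal.ofReal ((1 - ε) * t) < volume A' ∧
    MapsTo h A A' ∧ SurjOn h A A' ∧ StrictMonoOn h A ∧
    (∀ B ⊆ A, MeasurableSet B → volume (h '' B) = ENNReal.ofReal (∫ s in B, h' s)) ∧
    (∀ s ∈ A, |h' s - 1| < ε) ∧
    (∀ s ∈ A, ∀ j, Φ s x ∈ P j ↔ Φ (h s) y ∈ P j)

/-- `f_t(x,y,P)`. -/
noncomputable def fPart (Φ : ℝ → X → X) (P : ℕ → Set X) (t : ℝ) (x y : X) : ℝ :=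
  sInf ({ε : ℝ | 0 < ε ∧ PMatchable Φ P x y t ε} ∪ {1})

/-- The `(t,P)`-ball of radius `ε` centered at `x`. -/
def PBall (Φ : ℝ → X → X) (P : ℕ → Set X) (t ε : ℝ) (x : X) : Set X :=
  {y | fPart Φ P t x y < ε}

/-- `K_t(ε,P)`: minimal cardinality of an `(ε,t,P)`-cover (`⊤` if none exists). -/
noncomputable def Kt (μ : Measure X) (Φ : ℝ → X → X) (P : ℕ → Set X) (ε t : ℝ) : ℝ≥0∞ :=
  sInf ((fun C : Finset X => (C.card : ℝ≥0∞)) ''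
    {C : Finset X | ENNReal.ofReal (1 - ε) < μ (⋃ x ∈ C, PBall Φ P t ε x)})

/-- `β(u,ε,P) = liminf_{t→∞} log K_t(ε,P) / u(t)`. -/
noncomputable def betaU (μ : Measure X) (Φ : ℝ → X → X) (P : ℕ → Set X) (u : ℝ → ℝ)
    (ε : ℝ) : EReal :=
  Filter.liminf (fun t => ENNReal.log (Kt μ Φ P ε t) / (ENNReal.ofReal (u t) : EReal))
    Filter.atTop

/-- `e(u,P) = limsup_{ε→0⁺} β(u,ε,P)`. -/
noncomputable def eUP (μ : Measure X) (Φ : ℝ → X → X) (P : ℕ → Set X) (u : ℝ → ℝ) : EReal :=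
  Filter.limsup (fun ε => betaU μ Φ P u ε) (𝓝[>] (0 : ℝ))

/-- `e(Φ,u) = sup_P e(u,P)`. -/
noncomputable def ePhi (μ : Measure X) (Φ : ℝ → X → X) (u : ℝ → ℝ) : EReal :=
  ⨆ P : BPartition X, eUP μ Φ P.cells u

end FK

/-!
A discrete matching `i ↦ π i` of the `T`-orbits of `x` and `y` lifts to the suspension: the unit
time block `[i - r, i - r + 1)` of the orbit of `(x, r)` is matched with the block
`[π i - s, π i - s + 1)` of the orbit of `(y, s)` by a translation. On such a block both flow
orbits are the images of `T^i x` and `T^(π i) y` under the same time-`v` map, `v ∈ [0, 1]`, so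
uniform continuity of the flow on `[0, 1] × Y` turns `δ'`-closeness into `δ`-closeness. The
translation has derivative `1` and at most two pairs are lost, so discrete matchings of density
`> 1 - δ'` give flow matchings with `ε` of order `δ'`.
-/

theorem lt_of_mem_Ico_natCast_sub {r u v : ℝ} {i j : ℕ} (hu : u ∈ Ico ((i : ℝ) - r) (i - r + 1))
    (hv : v ∈ Ico ((j : ℝ) - r) (j - r + 1)) (hij : i < j) : u < v := by
  have : (i : ℝ) + 1 ≤ j := by exact_mod_cast hij
  linarith [hu.2, hv.1]

theorem disjoint_Ico_natCast_sub (r : ℝ) {i j : ℕ} (hij : i ≠ j) :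
    Disjoint (Ico ((i : ℝ) - r) (i - r + 1)) (Ico ((j : ℝ) - r) (j - r + 1)) := by
  refine Set.disjoint_left.2 fun u hi hj => ?_
  rcases hij.lt_or_gt with hlt | hlt
  · exact (lt_of_mem_Ico_natCast_sub hi hj hlt).false
  · exact (lt_of_mem_Ico_natCast_sub hj hi hlt).false

theorem floor_add_eq_of_mem_Ico_natCast_sub {r u : ℝ} {i : ℕ}
    (hu : u ∈ Ico ((i : ℝ) - r) (i - r + 1)) : ⌊u + r⌋₊ = i := by
  have : (0 : ℝ) ≤ i := i.cast_nonneg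
  rw [Nat.floor_eq_iff (by linarith [hu.1])]
  constructor <;> linarith [hu.1, hu.2]

theorem volume_biUnion_Ico_natCast_sub (r : ℝ) (I : Finset ℕ) :
    volume (⋃ i ∈ I, Ico ((i : ℝ) - r) (i - r + 1)) = I.card := by
  rw [measure_biUnion_finset (fun i _ j _ hij => disjoint_Ico_natCast_sub r hij)
    (fun _ _ => measurableSet_Ico)]
  simp [Real.volume_Ico]

theorem volume_image_add_const (a : ℝ) (S : Set ℝ) :
    volume ((fun u => u + a) '' S) = volume S := by
  rw [Set.image_add_right, measure_preimage_add_right]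

theorem volume_image_of_eqOn_add_const {ι : Type*} {I : Finset ι} {S : ι → Set ℝ}
    {c : ι → ℝ} {h : ℝ → ℝ} (hS : ∀ i ∈ I, MeasurableSet (S i))
    (hdisj : (I : Set ι).PairwiseDisjoint S)
    (hdisj' : (I : Set ι).PairwiseDisjoint fun i => (fun u => u + c i) '' S i)
    (hh : ∀ i ∈ I, EqOn h (fun u => u + c i) (S i))
    {B : Set ℝ} (hB : B ⊆ ⋃ i ∈ I, S i) (hBm : MeasurableSet B) :
    volume (h '' B) = volume B := by
  have hB_eq : B = ⋃ i ∈ I, B ∩ S i := by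
    rw [← Set.inter_iUnion₂, Set.inter_eq_left.2 hB]
  have himage : h '' B = ⋃ i ∈ I, (fun u => u + c i) '' (B ∩ S i) := by
    conv_lhs => rw [hB_eq]
    rw [Set.image_iUnion₂]
    exact iUnion₂_congr fun i hi => Set.image_congr fun u hu => hh i hi hu.2
  have hmeas' : ∀ i ∈ I, MeasurableSet ((fun u => u + c i) '' (B ∩ S i)) := fun i hi => by
    rw [Set.image_add_right]
    exact (hBm.inter (hS i hi)).preimage (measurable_add_const _)
  rw [himage, measure_biUnion_finset
      (hdisj'.mono fun i => Set.image_mono Set.inter_subset_right) hmeas']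
  simp only [volume_image_add_const]
  rw [← measure_biUnion_finset (hdisj.mono fun i => Set.inter_subset_right)
      fun i hi => hBm.inter (hS i hi), ← hB_eq]

theorem card_le_card_filter_one_le_add_two {D : Finset ℕ} {π : ℕ → ℕ} (hπ : Set.InjOn π D) :
    D.card ≤ (D.filter fun i => 1 ≤ i ∧ 1 ≤ π i).card + 2 := by
  classical
  have hsub : D.filter (fun i => ¬(1 ≤ i ∧ 1 ≤ π i)) ⊆ {0} ∪ D.filter (fun i => π i = 0) := by
    intro i hi
    obtain ⟨hiD, hi⟩ := Finset.mem_filter.1 hi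
    rcases Nat.eq_zero_or_pos i with rfl | hi0
    · exact Finset.mem_union_left _ (Finset.mem_singleton_self 0)
    · exact Finset.mem_union_right _ (Finset.mem_filter.2 ⟨hiD, by omega⟩)
  have hzero : (D.filter fun i => π i = 0).card ≤ 1 := Finset.card_le_one.2 fun a ha b hb => by
    simp only [Finset.mem_filter] at ha hb
    exact hπ ha.1 hb.1 (ha.2.trans hb.2.symm)
  have := Finset.card_le_card hsub
  have := Finset.card_union_le {0} (D.filter fun i => π i = 0)
  have := Finset.card_filter_add_card_filter_not (s := D) fun i => 1 ≤ i ∧ 1 ≤ π i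
  rw [Finset.card_singleton] at *
  omega

theorem IsFlow.apply_natCast {Y : Type*} [TopologicalSpace Y] {Ψ : ℝ → Y → Y} (hΨ : IsFlow Ψ)
    (m : ℕ) (p : Y) : Ψ m p = (Ψ 1)^[m] p := by
  induction m generalizing p with
  | zero => simpa using hΨ.map_zero p
  | succ m ih => rw [Nat.cast_succ, hΨ.map_add, ih, Function.iterate_succ_apply']

theorem IsFlow.apply_apply_eq_of_semiconj {X Y : Type*} [TopologicalSpace Y] {Ψ : ℝ → Y → Y}
    (hΨ : IsFlow Ψ) {T : X → X} {e : X → Y} (heT : Function.Semiconj e T (Ψ 1)) (a : X)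
    {r w v : ℝ} {m : ℕ} (h : r + w = m + v) : Ψ w (Ψ r (e a)) = Ψ v (e (T^[m] a)) := by
  rw [← hΨ.map_add, h, hΨ.map_add, hΨ.apply_natCast, (heT.iterate_right m).eq]

theorem exists_pos_forall_dist_apply_lt {Y : Type*} [MetricSpace Y] [CompactSpace Y]
    {Φ : ℝ → Y → Y} (hΦ : Continuous fun p : ℝ × Y => Φ p.1 p.2) {K : Set ℝ} (hK : IsCompact K)
    {δ : ℝ} (hδ : 0 < δ) :
    ∃ η > 0, ∀ u ∈ K, ∀ p q : Y, dist p q < η → dist (Φ u p) (Φ u q) < δ := by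
  have hUC := (hK.prod isCompact_univ).uniformContinuousOn_of_continuous hΦ.continuousOn
  obtain ⟨η, hη, hUC⟩ := Metric.uniformContinuousOn_iff.1 hUC δ hδ
  refine ⟨η, hη, fun u hu p q hpq => hUC (u, p) ⟨hu, trivial⟩ (u, q) ⟨hu, trivial⟩ ?_⟩
  simpa [Prod.dist_eq] using hpq

section Matching

variable {X Y : Type*} [MetricSpace X] [MetricSpace Y]

theorem matchable_of_blocks (Φ : ℝ → Y → Y) (p q : Y) {t ε δ r s : ℝ} (hε : 0 < ε)
    {I : Finset ℕ} {π : ℕ → ℕ} (hπ : StrictMonoOn π I)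
    (hsub : ∀ i ∈ I, Ico ((i : ℝ) - r) (i - r + 1) ⊆ Icc 0 t)
    (hsub' : ∀ i ∈ I, Ico ((π i : ℝ) - s) (π i - s + 1) ⊆ Icc 0 t)
    (hcard : ENNReal.ofReal ((1 - ε) * t) < I.card)
    (hclose : ∀ i ∈ I, ∀ u ∈ Ico ((i : ℝ) - r) (i - r + 1),
      dist (Φ u p) (Φ (u + ((π i : ℝ) - s - (i - r))) q) < δ) :
    Matchable Φ p q t ε δ := by
  set blk : ℝ → ℕ → Set ℝ := fun a i => Ico ((i : ℝ) - a) (i - a + 1)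
  set c : ℕ → ℝ := fun i => (π i : ℝ) - s - (i - r)
  set A := ⋃ i ∈ I, blk r i
  set A' := ⋃ i ∈ I, blk s (π i)
  set h : ℝ → ℝ := fun u => u + c ⌊u + r⌋₊
  have hh : ∀ i ∈ I, EqOn h (fun u => u + c i) (blk r i) := fun i _ u hu => by
    simp only [h, floor_add_eq_of_mem_Ico_natCast_sub hu]
  have hblk_image : ∀ i, (fun u => u + c i) '' blk r i = blk s (π i) := fun i => by
    simp only [blk, c, Set.image_add_const_Ico]
    congr 1 <;> ring
  have hdisj : (I : Set ℕ).PairwiseDisjoint (blk r) :=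
    fun i _ j _ hij => disjoint_Ico_natCast_sub r hij
  have hdisj' : (I : Set ℕ).PairwiseDisjoint fun i => (fun u => u + c i) '' blk r i := by
    intro i hi j hj hij
    simp only [Function.onFun, hblk_image]
    exact disjoint_Ico_natCast_sub s fun h => hij (hπ.injOn hi hj h)
  have himage : h '' A = A' := by
    simp only [A, A', Set.image_iUnion₂]
    exact iUnion₂_congr fun i hi => (Set.image_congr (hh i hi)).trans (hblk_image i)
  have hvol : ∀ B ⊆ A, MeasurableSet B → volume (h '' B) = volume B :=
    fun B hB hBm => volume_image_of_eqOn_add_const (fun _ _ => measurableSet_Ico) hdisj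
      hdisj' hh hB hBm
  have hAm : MeasurableSet A := Finset.measurableSet_biUnion _ fun _ _ => measurableSet_Ico
  have hvolA : volume A = I.card := volume_biUnion_Ico_natCast_sub r I
  have hvolA' : volume A' = I.card := by rw [← himage, hvol A subset_rfl hAm, hvolA]
  have hmono : StrictMonoOn h A := by
    intro u hu v hv huv
    simp only [A, Set.mem_iUnion₂] at hu hv
    obtain ⟨i, hi, hui⟩ := hu
    obtain ⟨j, hj, hvj⟩ := hv
    rcases lt_trichotomy i j with hij | rfl | hji
    · have hu' := hblk_image i ▸ Set.mem_image_of_mem _ hui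
      have hv' := hblk_image j ▸ Set.mem_image_of_mem _ hvj
      rw [hh i hi hui, hh j hj hvj]
      exact lt_of_mem_Ico_natCast_sub hu' hv' (hπ hi hj hij)
    · rw [hh i hi hui, hh i hi hvj]
      exact add_lt_add_left huv _
    · exact absurd huv (lt_of_mem_Ico_natCast_sub hvj hui hji).not_gt
  refine ⟨A, A', h, fun _ => 1, hAm,
    Finset.measurableSet_biUnion _ fun _ _ => measurableSet_Ico, iUnion₂_subset hsub,
    iUnion₂_subset hsub', hvolA ▸ hcard, hvolA' ▸ hcard,
    himage ▸ Set.mapsTo_image h A, himage ▸ Set.surjOn_image h A, hmono, ?_,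
    fun _ _ => by simpa using hε, ?_⟩
  · intro B hB hBm
    have hfin : volume B ≠ ⊤ := ne_top_of_le_ne_top (hvolA ▸ ENNReal.natCast_ne_top _)
      (measure_mono hB)
    rw [hvol B hB hBm, setIntegral_const, smul_eq_mul, mul_one, measureReal_def,
      ENNReal.ofReal_toReal hfin]
  · intro u hu
    simp only [A, Set.mem_iUnion₂] at hu
    obtain ⟨i, hi, hui⟩ := hu
    rw [hh i hi hui]
    exact hclose i hi u hui

theorem matchable_of_dMatching {T : X → X} {Ψ : ℝ → Y → Y} (hΨ : IsFlow Ψ) {e : X → Y}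
    (heT : Function.Semiconj e T (Ψ 1)) {x y : X} {n k : ℕ} {δ' δ ε t r s : ℝ} (hε : 0 < ε)
    (hε1 : ε ≤ 1) (hr : r ∈ Ico (0 : ℝ) 1) (hs : s ∈ Ico (0 : ℝ) 1)
    (hη : ∀ v ∈ Icc (0 : ℝ) 1, ∀ a b : X, dist a b < δ' → dist (Ψ v (e a)) (Ψ v (e b)) < δ)
    (hm : DMatching T x y n δ' k) (hnt : (n : ℝ) ≤ t) (hk : (1 - ε) * t + 2 < k) :
    Matchable Ψ (Ψ r (e x)) (Ψ s (e y)) t ε δ := by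
  obtain ⟨D, D', π, hD, hD', rfl, hbij, hπ, hdist⟩ := hm
  -- pairs with `i = 0` or `π i = 0` would give blocks starting before time `0`
  set I := D.filter fun i => 1 ≤ i ∧ 1 ≤ π i
  have hI : ∀ i ∈ I, i ∈ D ∧ 1 ≤ i ∧ 1 ≤ π i := fun i hi => Finset.mem_filter.1 hi
  have hblock : ∀ {j : ℕ} {a : ℝ}, 1 ≤ j → j ∈ Finset.range n → a ∈ Ico (0 : ℝ) 1 →
      Ico ((j : ℝ) - a) (j - a + 1) ⊆ Icc 0 t := by
    intro j a hj hjn ha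
    have h1 : (1 : ℝ) ≤ j := by exact_mod_cast hj
    have h2 : (j : ℝ) + 1 ≤ n := by exact_mod_cast Finset.mem_range.1 hjn
    exact Ico_subset_Icc_self.trans (Icc_subset_Icc (by linarith [ha.2]) (by linarith [ha.1]))
  refine matchable_of_blocks Ψ _ _ hε (hπ.mono (Finset.coe_subset.2 (Finset.filter_subset _ _)))
    (fun i hi => hblock (hI i hi).2.1 (hD (hI i hi).1) hr)
    (fun i hi => hblock (hI i hi).2.2 (hD' (hbij.mapsTo (hI i hi).1)) hs) ?_ ?_
  · have hcard : (D.card : ℝ) ≤ I.card + 2 := by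
      exact_mod_cast card_le_card_filter_one_le_add_two hπ.injOn
    have ht : 0 ≤ (1 - ε) * t := mul_nonneg (by linarith) (n.cast_nonneg.trans hnt)
    have hpos : I.card ≠ 0 := by
      rintro h0
      rw [h0, Nat.cast_zero] at hcard
      linarith
    exact (ENNReal.ofReal_lt_natCast hpos).2 (by linarith)
  · intro i hi u hu
    rw [hΨ.apply_apply_eq_of_semiconj heT x (m := i) (v := u - (i - r)) (by ring),
      hΨ.apply_apply_eq_of_semiconj heT y (m := π i) (v := u - (i - r)) (by ring)]
    exact hη _ ⟨by linarith [hu.1], by linarith [hu.2]⟩ _ _ (hdist i (hI i hi).1)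

end Matching

section Gaps

variable {X : Type*} [MetricSpace X]

theorem fkGap_nonneg (Φ : ℝ → X → X) (t δ : ℝ) (x y : X) : 0 ≤ fkGap Φ t δ x y :=
  Real.sInf_nonneg fun _ hε => hε.elim (fun h => h.1.le) fun h => h ▸ zero_le_one

theorem fkGap_le_of_matchable {Φ : ℝ → X → X} {t ε δ : ℝ} {x y : X} (hε : 0 < ε)
    (h : Matchable Φ x y t ε δ) : fkGap Φ t δ x y ≤ ε :=
  csInf_le ⟨0, fun _ hε => hε.elim (fun h => h.1.le) fun h => h ▸ zero_le_one⟩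
    (Or.inl ⟨hε, h⟩)

theorem rhoFK_eq_zero_of_eventually_matchable {Φ : ℝ → X → X} {x y : X}
    (h : ∀ δ > 0, ∀ ε ∈ Ioo (0 : ℝ) 1, ∀ᶠ t in atTop, Matchable Φ x y t ε δ) :
    rhoFK Φ x y = 0 := by
  suffices hset : {δ : ℝ | 0 < δ ∧ fkDist Φ δ x y < δ} = Ioi 0 by
    rw [rhoFK, hset, csInf_Ioi]
  refine Set.ext fun δ => ⟨And.left, fun hδ => ⟨hδ, ?_⟩⟩
  set ε := min (δ / 2) (1 / 2)
  have hε : ε ∈ Ioo (0 : ℝ) 1 :=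
    ⟨lt_min (half_pos hδ) one_half_pos, (min_le_right _ _).trans_lt one_half_lt_one⟩
  have hbdd : IsBoundedUnder (· ≥ ·) atTop fun t => fkGap Φ t δ x y :=
    isBoundedUnder_of ⟨0, fun t => fkGap_nonneg Φ t δ x y⟩
  calc fkDist Φ δ x y ≤ ε := limsup_le_of_le hbdd.isCoboundedUnder_flip
        ((h δ hδ ε hε).mono fun t => fkGap_le_of_matchable hε.1)
    _ < δ := (min_le_left _ _).trans_lt (half_lt_self hδ)

theorem DMatching.mono {T : X → X} {x y : X} {n k : ℕ} {δ δ' : ℝ}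
    (h : DMatching T x y n δ k) (hδ : δ ≤ δ') : DMatching T x y n δ' k :=
  let ⟨D, D', π, hD, hD', hk, hbij, hπ, hdist⟩ := h
  ⟨D, D', π, hD, hD', hk, hbij, hπ, fun i hi => (hdist i hi).trans_le hδ⟩

theorem dMatching_zero (T : X → X) (x y : X) (n : ℕ) (δ : ℝ) : DMatching T x y n δ 0 :=
  ⟨∅, ∅, id, Finset.empty_subset _, Finset.empty_subset _, rfl, by simp,
    strictMono_id.strictMonoOn _, by simp⟩

theorem dMatching_card_le {T : X → X} {x y : X} {n k : ℕ} {δ : ℝ}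
    (h : DMatching T x y n δ k) : k ≤ n := by
  obtain ⟨D, -, -, hD, -, rfl, -⟩ := h
  simpa using Finset.card_le_card hD

theorem dMatching_sSup (T : X → X) (x y : X) (n : ℕ) (δ : ℝ) :
    DMatching T x y n δ (sSup {k | DMatching T x y n δ k}) :=
  Nat.sSup_mem ⟨0, dMatching_zero T x y n δ⟩ ⟨n, fun _ => dMatching_card_le⟩

theorem dGap_nonneg (T : X → X) (n : ℕ) (δ : ℝ) (x y : X) : 0 ≤ dGap T n δ x y := by
  rw [dGap, sub_nonneg]
  exact div_le_one_of_le₀ (by exact_mod_cast dMatching_card_le (dMatching_sSup T x y n δ))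
    n.cast_nonneg

theorem dGap_le_one (T : X → X) (n : ℕ) (δ : ℝ) (x y : X) : dGap T n δ x y ≤ 1 :=
  sub_le_self _ (by positivity)

theorem eventually_exists_dMatching_of_dRhoFK_eq_zero {T : X → X} {x y : X}
    (h : dRhoFK T x y = 0) {δ : ℝ} (hδ : 0 < δ) :
    ∀ᶠ n in atTop, ∃ k, DMatching T x y n δ k ∧ (1 - δ) * n < k := by
  -- `1` lies in the set whose infimum is `dRhoFK`, so `dRhoFK = 0` is not the junk `sInf ∅`
  have hone : dFKdist T 1 x y ≤ 1 := limsup_le_of_le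
    (isBoundedUnder_of ⟨0, fun n => dGap_nonneg T n 1 x y⟩).isCoboundedUnder_flip
    (Eventually.of_forall fun n => dGap_le_one T n 1 x y)
  obtain ⟨δ', ⟨-, hδ'⟩, hδ'δ⟩ := exists_lt_of_csInf_lt
    (s := {δ | 0 < δ ∧ dFKdist T δ x y ≤ δ}) ⟨1, one_pos, hone⟩ (h.trans_lt hδ)
  filter_upwards [eventually_lt_of_limsup_lt (hδ'.trans_lt hδ'δ)
      (isBoundedUnder_of ⟨1, fun n => dGap_le_one T n δ' x y⟩),
    eventually_gt_atTop 0] with n hn hn0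
  refine ⟨_, (dMatching_sSup T x y n δ').mono hδ'δ.le, ?_⟩
  rw [dGap, sub_lt_comm, lt_div_iff₀ (by exact_mod_cast hn0)] at hn
  exact hn

end Gaps

theorem stmt6_general {X Y : Type*} [MetricSpace X]
    [MetricSpace Y] [CompactSpace Y]
    (T : X ≃ₜ X) (Ψ : ℝ → Y → Y) (hΨ : IsFlow Ψ) (e : X → Y)
    (he : ∀ a b : X, dist (e a) (e b) = dist a b)
    (heT : ∀ a : X, Ψ 1 (e a) = e (T a))
    (x y : X) (h : dRhoFK (⇑T) x y = 0)
    (r s : ℝ) (hr : r ∈ Set.Ico (0:ℝ) 1) (hs : s ∈ Set.Ico (0:ℝ) 1) :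
    rhoFK Ψ (Ψ r (e x)) (Ψ s (e y)) = 0 := by
  refine rhoFK_eq_zero_of_eventually_matchable fun δ hδ ε hε => ?_
  obtain ⟨η, hη, hΨη⟩ := exists_pos_forall_dist_apply_lt hΨ.cont isCompact_Icc hδ
  set δ' := min η (ε / 2)
  have hδ' : 0 < δ' := lt_min hη (half_pos hε.1)
  filter_upwards [tendsto_nat_floor_atTop.eventually
      (eventually_exists_dMatching_of_dRhoFK_eq_zero h hδ'),
    eventually_ge_atTop (6 / ε)] with t ⟨k, hm, hk⟩ ht
  have ht0 : 0 ≤ t := (div_nonneg (by norm_num) hε.1.le).trans ht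
  refine matchable_of_dMatching hΨ (fun a => (heT a).symm) hε.1 hε.2.le hr hs
    (fun v hv a b hab => hΨη v hv _ _ ((he a b).trans_lt (hab.trans_le (min_le_left _ _))))
    hm (Nat.floor_le ht0) ?_
  -- `k > n - δ' n ≥ t - 1 - (ε / 2) t ≥ (1 - ε) t + 2` once `ε t ≥ 6`
  have hεt : 6 ≤ ε * t := by rwa [div_le_iff₀ hε.1, mul_comm] at ht
  have hnt : δ' * ⌊t⌋₊ ≤ δ' * t := mul_le_mul_of_nonneg_left (Nat.floor_le ht0) hδ'.le
  have hδ't : δ' * t ≤ ε / 2 * t := mul_le_mul_of_nonneg_right (min_le_right _ _) ht0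
  linarith [Nat.lt_floor_add_one t]

theorem stmt6 {X Y : Type*} [MetricSpace X] [CompactSpace X]
    [MetricSpace Y] [CompactSpace Y]
    (hdiam : Metric.diam (Set.univ : Set X) ≤ 1)
    (T : X ≃ₜ X) (Ψ : ℝ → Y → Y) (hΨ : IsFlow Ψ) (e : X → Y)
    (he : ∀ a b : X, dist (e a) (e b) = dist a b)
    (heT : ∀ a : X, Ψ 1 (e a) = e (T a))
    (x y : X) (h : dRhoFK (⇑T) x y = 0)
    (r s : ℝ) (hr : r ∈ Set.Ico (0:ℝ) 1) (hs : s ∈ Set.Ico (0:ℝ) 1) :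
    rhoFK Ψ (Ψ r (e x)) (Ψ s (e y)) = 0 :=
  stmt6_general T Ψ hΨ e he heT x y h r s hr hs
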